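/- Leakage chain rule for quantum min-entropy: for any state ρ_AXB on A⊗X⊗B, H_min(A|XB)_ρ ≥ H_min(A|B)_ρ - 2 log dim(X). -/

import Mathlib

open Matrix Kronecker BigOperators Finset
open scoped ComplexOrder

/-- Trace distance: half the trace norm of the difference. -/
noncomputable def traceDist {d : Type*} [Fintype d] [DecidableEq d]
    (ρ σ : Matrix d d ℂ) : ℝ :=
  (let hA := Matrix.posSemidef_conjTranspose_mul_self (ρ - σ);
    ((hA.1.eigenvectorUnitary : Matrix d d ℂ) *
      diagonal (fun i => ((Real.sqrt (hA.1.eigenvalues i) : ℝ) : ℂ)) *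
      (star hA.1.eigenvectorUnitary : Matrix d d ℂ)).trace).re / 2

/-- A density operator: positive semidefinite with unit trace. -/
def IsDensity {d : Type*} [Fintype d] [DecidableEq d] (ρ : Matrix d d ℂ) : Prop :=
  ρ.PosSemidef ∧ ρ.trace = 1

/-- Rank-one projection `|v⟩⟨v|` onto a vector. -/
def proj {d : Type*} [Fintype d] [DecidableEq d] (v : d → ℂ) : Matrix d d ℂ :=
  Matrix.vecMulVec v (star v)

/-- A unit vector. -/
def IsUnit' {d : Type*} [Fintype d] (v : d → ℂ) : Prop :=
  dotProduct (star v) v = 1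

/-- Partial trace over the second tensor factor. -/
noncomputable def ptraceY {X Y : Type*} [Fintype X] [Fintype Y] [DecidableEq X] [DecidableEq Y]
    (ρ : Matrix (X × Y) (X × Y) ℂ) : Matrix X X ℂ :=
  fun x x' => ∑ y : Y, ρ (x, y) (x', y)

/-- Conditional quantum min-entropy:
`H_min(A|B)_ρ = -inf_{σ_B density} inf {λ : ρ_AB ≤ 2^λ I_A ⊗ σ_B}`. -/
noncomputable def condMinEntropy {A B : Type*} [Fintype A] [Fintype B]
    [DecidableEq A] [DecidableEq B] (ρ : Matrix (A × B) (A × B) ℂ) : ℝ :=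
  - sInf {lam : ℝ | ∃ σ : Matrix B B ℂ, IsDensity σ ∧
      (((2 : ℝ) ^ lam • ((1 : Matrix A A ℂ) ⊗ₖ σ)) - ρ).PosSemidef}

/-- A cq-state `Σ_a p(a) |a⟩⟨a| ⊗ ρ_B^a`. -/
noncomputable def cqState {A B : Type*} [Fintype A] [Fintype B]
    [DecidableEq A] [DecidableEq B]
    (p : A → ℝ) (ρB : A → Matrix B B ℂ) : Matrix (A × B) (A × B) ℂ :=
  ∑ a : A, (p a : ℂ) • (proj (fun x => if x = a then 1 else 0) ⊗ₖ ρB a)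

/-- Partial trace over the middle (`X`) system of a state on `A ⊗ X ⊗ B`. -/
noncomputable def ptraceMid {A X B : Type*} [Fintype A] [Fintype X] [Fintype B]
    [DecidableEq A] [DecidableEq X] [DecidableEq B]
    (ρ : Matrix (A × X × B) (A × X × B) ℂ) : Matrix (A × B) (A × B) ℂ :=
  fun ab ab' => ∑ x : X, ρ (ab.1, x, ab.2) (ab'.1, x, ab'.2)


/-! With `σ_XB := I_X / |X| ⊗ σ_B`, pinching gives `ρ_AXB ≤ |X| · I_X ⊗ ρ_AB`, and
`ρ_AB ≤ 2^λ I_A ⊗ σ_B` then yields `ρ_AXB ≤ |X|² 2^λ · I_A ⊗ σ_XB`: every feasible exponent for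
`H_min(A|B)` becomes a feasible exponent for `H_min(A|XB)` after adding `2 log |X|`. -/

open scoped MatrixOrder

namespace Matrix

lemma star_dotProduct_mulVec_conjTranspose_mul_self {m n : Type*} [Fintype m] [Fintype n]
    (C : Matrix m n ℂ) (v : n → ℂ) :
    star v ⬝ᵥ (Cᴴ * C) *ᵥ v = ((‖WithLp.toLp 2 (C *ᵥ v)‖ ^ 2 : ℝ) : ℂ) := by
  rw [← mulVec_mulVec, dotProduct_mulVec, vecMul_conjTranspose, star_star, dotProduct_comm,
    ← EuclideanSpace.inner_toLp_toLp, inner_self_eq_norm_sq_to_K]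
  push_cast
  rfl

lemma PosSemidef.dotProduct_mulVec_sum_le {ι n : Type*} [Fintype ι] [Fintype n]
    {M : Matrix n n ℂ} (hM : M.PosSemidef) (w : ι → n → ℂ) :
    star (∑ i, w i) ⬝ᵥ M *ᵥ ∑ i, w i ≤ Fintype.card ι * ∑ i, star (w i) ⬝ᵥ M *ᵥ w i := by
  classical
  obtain ⟨C, rfl⟩ := CStarAlgebra.nonneg_iff_eq_star_mul_self.mp hM.nonneg
  simp only [star_eq_conjTranspose, star_dotProduct_mulVec_conjTranspose_mul_self]
  rw [mulVec_sum, WithLp.toLp_sum]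
  norm_cast
  calc ‖∑ i, WithLp.toLp 2 (C *ᵥ w i)‖ ^ 2 ≤ (∑ i, ‖WithLp.toLp 2 (C *ᵥ w i)‖) ^ 2 := by
        gcongr
        exact norm_sum_le _ _
    _ ≤ _ := by simpa using sq_sum_le_card_mul_sum_sq (s := univ)

lemma PosSemidef.one_sub_of_trace_eq_one {n : Type*} [Fintype n] [DecidableEq n]
    {M : Matrix n n ℂ} (hM : M.PosSemidef) (htr : M.trace = 1) : (1 - M).PosSemidef := by
  have hsum : ∑ i, hM.1.eigenvalues i = 1 := by
    have h := congrArg Complex.re hM.1.trace_eq_sum_eigenvalues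
    rw [htr, Complex.re_sum] at h
    simpa using h.symm
  have hle : ∀ i, hM.1.eigenvalues i ≤ 1 := fun i =>
    hsum ▸ single_le_sum (fun j _ => hM.eigenvalues_nonneg j) (mem_univ i)
  rw [hM.1.spectral_theorem, ← map_one (Unitary.conjStarAlgAut ℂ _ hM.1.eigenvectorUnitary),
    ← map_sub, Unitary.conjStarAlgAut_apply, ← diagonal_one, diagonal_sub]
  refine (PosSemidef.diagonal fun i => ?_).mul_mul_conjTranspose_same _
  simpa [sub_nonneg] using Complex.real_le_real.mpr (hle i)

end Matrix

lemma IsDensity.nonempty {d : Type*} [Fintype d] [DecidableEq d] {ρ : Matrix d d ℂ}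
    (hρ : IsDensity ρ) : Nonempty d := by
  by_contra h
  rw [not_nonempty_iff] at h
  simpa [Matrix.trace] using hρ.2

lemma isDensity_inv_card_smul_one_kronecker {Y B : Type*} [Fintype Y] [Fintype B]
    [DecidableEq Y] [DecidableEq B] [Nonempty Y] {σ : Matrix B B ℂ} (hσ : IsDensity σ) :
    IsDensity ((Fintype.card Y : ℝ)⁻¹ • ((1 : Matrix Y Y ℂ) ⊗ₖ σ)) := by
  refine ⟨(PosSemidef.one.kronecker hσ.1).smul (by positivity), ?_⟩
  rw [trace_smul, trace_kronecker, trace_one, hσ.2, mul_one, Complex.real_smul]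
  push_cast
  exact inv_mul_cancel₀ (by simp)

lemma isDensity_inv_card_smul_one {B : Type*} [Fintype B] [DecidableEq B] [Nonempty B] :
    IsDensity ((Fintype.card B : ℝ)⁻¹ • (1 : Matrix B B ℂ)) := by
  refine ⟨PosSemidef.one.smul (by positivity), ?_⟩
  rw [trace_smul, trace_one, Complex.real_smul]
  push_cast
  exact inv_mul_cancel₀ (by simp)

lemma csInf_le_csInf_add_of_forall_add_mem {S T : Set ℝ} {c : ℝ} (hS : BddBelow S)
    (hT : T.Nonempty) (h : ∀ t ∈ T, t + c ∈ S) : sInf S ≤ sInf T + c := by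
  have : sInf S - c ≤ sInf T := le_csInf hT fun t ht => by linarith [csInf_le hS (h t ht)]
  linarith

section MinEntropy

variable {A B : Type*} [Fintype A] [Fintype B] [DecidableEq A] [DecidableEq B]

def condMinEntropyFeasible (ρ : Matrix (A × B) (A × B) ℂ) : Set ℝ :=
  {lam : ℝ | ∃ σ : Matrix B B ℂ, IsDensity σ ∧
    (((2 : ℝ) ^ lam • ((1 : Matrix A A ℂ) ⊗ₖ σ)) - ρ).PosSemidef}

lemma condMinEntropy_eq_neg_sInf (ρ : Matrix (A × B) (A × B) ℂ) :
    condMinEntropy ρ = - sInf (condMinEntropyFeasible ρ) := rfl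

lemma bddBelow_condMinEntropyFeasible {ρ : Matrix (A × B) (A × B) ℂ} (hρ : ρ.trace = 1) :
    BddBelow (condMinEntropyFeasible ρ) := by
  refine ⟨-Real.logb 2 (Fintype.card A), fun lam ⟨σ, hσ, hpsd⟩ => ?_⟩
  have hone : 1 ≤ (2 : ℝ) ^ lam * Fintype.card A := by
    have := hpsd.trace_nonneg
    rw [trace_sub, trace_smul, trace_kronecker, trace_one, hσ.2, hρ, mul_one, Complex.real_smul,
      sub_nonneg] at this
    exact_mod_cast this
  have hA : 0 < (Fintype.card A : ℝ) := pos_of_mul_pos_right (one_pos.trans_le hone) (by positivity)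
  have := Real.logb_le_logb_of_le one_lt_two one_pos hone
  rw [Real.logb_one, Real.logb_mul (by positivity) hA.ne',
    Real.logb_rpow two_pos one_lt_two.ne'] at this
  linarith

lemma condMinEntropyFeasible_nonempty {ρ : Matrix (A × B) (A × B) ℂ} (hρ : IsDensity ρ) :
    (condMinEntropyFeasible ρ).Nonempty := by
  have : Nonempty B := hρ.nonempty.map Prod.snd
  have hB : (Fintype.card B : ℝ) ≠ 0 := by positivity
  refine ⟨Real.logb 2 (Fintype.card B), _, isDensity_inv_card_smul_one, ?_⟩
  rw [kronecker_smul, one_kronecker_one, smul_smul,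
    Real.rpow_logb two_pos one_lt_two.ne' (by positivity), mul_inv_cancel₀ hB, one_smul]
  exact hρ.1.one_sub_of_trace_eq_one hρ.2

end MinEntropy

section MiddleSystem

variable {A X B : Type*}

def midSlice (v : A × X × B → ℂ) (x : X) : A × B → ℂ :=
  fun ab => v (ab.1, x, ab.2)

def midInsert [DecidableEq X] (x : X) (u : A × B → ℂ) : A × X × B → ℂ :=
  fun p => if p.2.1 = x then u (p.1, p.2.2) else 0

/-- The operator `I_X ⊗ N` on `A ⊗ X ⊗ B`. -/
def oneKronMid (X : Type*) [DecidableEq X] (N : Matrix (A × B) (A × B) ℂ) :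
    Matrix (A × X × B) (A × X × B) ℂ :=
  ((1 : Matrix X X ℂ) ⊗ₖ N).submatrix (fun p => (p.2.1, p.1, p.2.2)) (fun p => (p.2.1, p.1, p.2.2))

lemma sum_midInsert_midSlice [Fintype X] [DecidableEq X] (v : A × X × B → ℂ) :
    ∑ x, midInsert x (midSlice v x) = v := by
  ext ⟨a, x, b⟩
  simp [midInsert, midSlice, Finset.sum_apply]

lemma posSemidef_oneKronMid [Fintype A] [Fintype X] [Fintype B] [DecidableEq X]
    {N : Matrix (A × B) (A × B) ℂ} (hN : N.PosSemidef) : (oneKronMid X N).PosSemidef :=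
  (PosSemidef.one.kronecker hN).submatrix _

lemma oneKronMid_sub [DecidableEq X] (M N : Matrix (A × B) (A × B) ℂ) :
    oneKronMid X (M - N) = oneKronMid X M - oneKronMid X N := by
  ext p q
  simp [oneKronMid, mul_sub]

lemma oneKronMid_smul [DecidableEq X] (r : ℝ) (N : Matrix (A × B) (A × B) ℂ) :
    oneKronMid X (r • N) = r • oneKronMid X N := by
  ext p q
  simp only [oneKronMid, submatrix_apply, kroneckerMap_apply, Matrix.smul_apply, Complex.real_smul]
  ring

lemma oneKronMid_one_kronecker [DecidableEq A] [DecidableEq X] (σ : Matrix B B ℂ) :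
    oneKronMid X ((1 : Matrix A A ℂ) ⊗ₖ σ) = (1 : Matrix A A ℂ) ⊗ₖ ((1 : Matrix X X ℂ) ⊗ₖ σ) := by
  ext ⟨a, x, b⟩ ⟨a', x', b'⟩
  simp only [oneKronMid, submatrix_apply, kroneckerMap_apply]
  ring

lemma star_dotProduct_oneKronMid_mulVec [Fintype A] [Fintype X] [Fintype B] [DecidableEq X]
    (N : Matrix (A × B) (A × B) ℂ) (v : A × X × B → ℂ) :
    star v ⬝ᵥ oneKronMid X N *ᵥ v = ∑ x, star (midSlice v x) ⬝ᵥ N *ᵥ midSlice v x := by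
  simp [dotProduct, mulVec, oneKronMid, midSlice, one_apply, Fintype.sum_prod_type,
    Finset.mul_sum]
  exact Finset.sum_comm

variable [Fintype A] [Fintype X] [Fintype B] [DecidableEq A] [DecidableEq X] [DecidableEq B]

lemma ptraceMid_eq_sum_submatrix (ρ : Matrix (A × X × B) (A × X × B) ℂ) :
    ptraceMid ρ = ∑ x, ρ.submatrix (fun ab => (ab.1, x, ab.2)) (fun ab => (ab.1, x, ab.2)) := by
  ext ab ab'
  simp [ptraceMid, Matrix.sum_apply]

lemma trace_ptraceMid (ρ : Matrix (A × X × B) (A × X × B) ℂ) :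
    (ptraceMid ρ).trace = ρ.trace := by
  simp only [Matrix.trace, Matrix.diag, ptraceMid, Fintype.sum_prod_type]
  exact Finset.sum_congr rfl fun a _ => Finset.sum_comm

lemma posSemidef_ptraceMid {ρ : Matrix (A × X × B) (A × X × B) ℂ} (hρ : ρ.PosSemidef) :
    (ptraceMid ρ).PosSemidef := by
  rw [ptraceMid_eq_sum_submatrix]
  exact posSemidef_sum _ fun x _ => hρ.submatrix _

lemma IsDensity.ptraceMid {ρ : Matrix (A × X × B) (A × X × B) ℂ} (hρ : IsDensity ρ) :
    IsDensity (ptraceMid ρ) :=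
  ⟨posSemidef_ptraceMid hρ.1, (trace_ptraceMid ρ).trans hρ.2⟩

lemma star_dotProduct_ptraceMid_mulVec (ρ : Matrix (A × X × B) (A × X × B) ℂ) (u : A × B → ℂ) :
    star u ⬝ᵥ ptraceMid ρ *ᵥ u = ∑ x, star (midInsert x u) ⬝ᵥ ρ *ᵥ midInsert x u := by
  simp [dotProduct, mulVec, ptraceMid, midInsert, Fintype.sum_prod_type, Finset.sum_mul,
    Finset.mul_sum, apply_ite (starRingEnd ℂ)]
  conv_rhs => rw [Finset.sum_comm]
  refine Finset.sum_congr rfl fun a _ => ?_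
  conv_rhs => rw [Finset.sum_comm]
  refine Finset.sum_congr rfl fun b _ => ?_
  conv_rhs => rw [Finset.sum_comm]
  exact Finset.sum_congr rfl fun a' _ => Finset.sum_comm

/- Pinching onto the blocks `x = x'` costs a factor `|X|`; each diagonal block `ρ_xx` is then
dominated by `ρ_AB = ∑ y, ρ_yy`. -/
lemma posSemidef_card_smul_oneKronMid_ptraceMid_sub {ρ : Matrix (A × X × B) (A × X × B) ℂ}
    (hρ : ρ.PosSemidef) :
    ((Fintype.card X : ℝ) • oneKronMid X (ptraceMid ρ) - ρ).PosSemidef := by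
  have hE := (posSemidef_oneKronMid (X := X) (posSemidef_ptraceMid hρ)).smul
    (Nat.cast_nonneg (Fintype.card X) : (0 : ℝ) ≤ _)
  refine .of_dotProduct_mulVec_nonneg (hE.isHermitian.sub hρ.isHermitian) fun v => ?_
  rw [sub_mulVec, dotProduct_sub, smul_mulVec, dotProduct_smul, star_dotProduct_oneKronMid_mulVec,
    sub_nonneg, Complex.real_smul]
  simp only [star_dotProduct_ptraceMid_mulVec]
  calc star v ⬝ᵥ ρ *ᵥ v
      = star (∑ x, midInsert x (midSlice v x)) ⬝ᵥ ρ *ᵥ ∑ x, midInsert x (midSlice v x) := by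
        rw [sum_midInsert_midSlice]
    _ ≤ Fintype.card X *
          ∑ x, star (midInsert x (midSlice v x)) ⬝ᵥ ρ *ᵥ midInsert x (midSlice v x) :=
        hρ.dotProduct_mulVec_sum_le _
    _ ≤ _ := by
        push_cast
        gcongr with x
        exact single_le_sum
          (f := fun y => star (midInsert y (midSlice v x)) ⬝ᵥ ρ *ᵥ midInsert y (midSlice v x))
          (fun y _ => hρ.dotProduct_mulVec_nonneg _) (mem_univ x)

end MiddleSystem

lemma add_two_logb_card_mem_condMinEntropyFeasible {A X B : Type*} [Fintype A] [Fintype X]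
    [Fintype B] [DecidableEq A] [DecidableEq X] [DecidableEq B] [Nonempty X]
    {ρ : Matrix (A × X × B) (A × X × B) ℂ} (hρ : ρ.PosSemidef) {lam : ℝ}
    (hlam : lam ∈ condMinEntropyFeasible (ptraceMid ρ)) :
    lam + 2 * Real.logb 2 (Fintype.card X) ∈ condMinEntropyFeasible (A := A) (B := X × B) ρ := by
  obtain ⟨σ, hσ, hpsd⟩ := hlam
  refine ⟨_, isDensity_inv_card_smul_one_kronecker (Y := X) hσ, ?_⟩
  set d : ℝ := (Fintype.card X : ℝ)
  have hd : 0 < d := by positivity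
  have hscale : (2 : ℝ) ^ (lam + 2 * Real.logb 2 d) * d⁻¹ = d * 2 ^ lam := by
    rw [Real.rpow_add two_pos, mul_comm 2, Real.rpow_mul zero_le_two,
      Real.rpow_logb two_pos one_lt_two.ne' hd, Real.rpow_two]
    field_simp
  have hsplit : (2 : ℝ) ^ (lam + 2 * Real.logb 2 d) • ((1 : Matrix A A ℂ) ⊗ₖ
        (d⁻¹ • ((1 : Matrix X X ℂ) ⊗ₖ σ))) - ρ =
      d • oneKronMid X ((2 : ℝ) ^ lam • ((1 : Matrix A A ℂ) ⊗ₖ σ) - ptraceMid ρ) +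
        (d • oneKronMid X (ptraceMid ρ) - ρ) := by
    rw [kronecker_smul, smul_smul, hscale, oneKronMid_sub, oneKronMid_smul,
      oneKronMid_one_kronecker, smul_sub, smul_smul]
    abel
  rw [hsplit]
  exact ((posSemidef_oneKronMid hpsd).smul hd.le).add
    (posSemidef_card_smul_oneKronMid_ptraceMid_sub hρ)

/-- Leakage chain rule for quantum min-entropy:
`H_min(A|XB)_ρ ≥ H_min(A|B)_ρ - 2 log₂ dim(X)`. -/
theorem leakage_chain_rule
    {A X B : Type*} [Fintype A] [Fintype X] [Fintype B]
    [DecidableEq A] [DecidableEq X] [DecidableEq B]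
    (ρ : Matrix (A × X × B) (A × X × B) ℂ) (hρ : IsDensity ρ) :
    condMinEntropy (A := A) (B := X × B) ρ ≥
      condMinEntropy (ptraceMid ρ) - 2 * Real.logb 2 (Fintype.card X) := by
  have : Nonempty X := hρ.nonempty.map fun p => p.2.1
  have hle := csInf_le_csInf_add_of_forall_add_mem (bddBelow_condMinEntropyFeasible hρ.2)
    (condMinEntropyFeasible_nonempty hρ.ptraceMid) fun _ =>
      add_two_logb_card_mem_condMinEntropyFeasible hρ.1
  rw [condMinEntropy_eq_neg_sInf, condMinEntropy_eq_neg_sInf]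
  linarith
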